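/- Let E be a real Banach space and let (E_λ)_{λ∈Λ} be a family of closed subspaces of E that is directed by inclusion and whose union is dense in E, such that for each λ there exists a linear projection P_λ : E → E_λ with ‖P_λ‖ ≤ 1. For a Banach space G and a free Banach f-algebra (A_G, η_G) over G, define τ_G(f) for f ∈ A_G as the supremum of ‖T̂(f)‖ over all finite-dimensional semiprime Banach f-algebras B, all linear operators T : G → B with ‖T‖ ≤ 1, and T̂ : A_G → B the unique lattice-algebra homomorphic extension with T̂ ∘ η_G = T. Suppose that for every λ and every free Banach f-algebra (A_λ, η_λ) over E_λ one has τ_{E_λ}(f) = ‖f‖ for all f ∈ A_λ. Then for every free Banach f-algebra (A, η) over E one has τ_E(f) = ‖f‖ for all f ∈ A. -/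

import Mathlib

/-- A normed lattice ordered group (removed from Mathlib; old definition restored). -/
class NormedLatticeAddCommGroup (α : Type*) extends NormedAddCommGroup α, Lattice α, HasSolidNorm α where
  add_le_add_left : ∀ a b : α, a ≤ b → ∀ c : α, c + a ≤ c + b

/-- A bundled Banach f-algebra. -/
structure BanachFAlg : Type 1 where
  carrier : Type
  [grp : NormedLatticeAddCommGroup carrier]
  [mod : NormedSpace ℝ carrier]
  [compl : CompleteSpace carrier]
  mul : carrier → carrier → carrier
  mul_assoc' : ∀ a b c, mul (mul a b) c = mul a (mul b c)
  add_mul' : ∀ a b c, mul (a + b) c = mul a c + mul b c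
  mul_add' : ∀ a b c, mul a (b + c) = mul a b + mul a c
  smul_mul' : ∀ (r : ℝ) (a b), mul (r • a) b = r • mul a b
  mul_smul' : ∀ (r : ℝ) (a b), mul a (r • b) = r • mul a b
  mul_nonneg' : ∀ a b, 0 ≤ a → 0 ≤ b → 0 ≤ mul a b
  inf_mul_left' : ∀ a b c, a ⊓ b = 0 → 0 ≤ c → mul c a ⊓ b = 0
  inf_mul_right' : ∀ a b c, a ⊓ b = 0 → 0 ≤ c → mul a c ⊓ b = 0
  norm_mul_le' : ∀ a b, ‖mul a b‖ ≤ ‖a‖ * ‖b‖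

attribute [instance] BanachFAlg.grp BanachFAlg.mod BanachFAlg.compl

/-- Lattice-algebra homomorphism between bundled Banach f-algebras. -/
def IsLatAlgHom (A B : BanachFAlg) (T : A.carrier →L[ℝ] B.carrier) : Prop :=
  (∀ a b, T (A.mul a b) = B.mul (T a) (T b)) ∧ (∀ a b, T (a ⊔ b) = T a ⊔ T b)

/-- `(A, η)` is a free Banach f-algebra over `E`. -/
def IsFreeBanachFAlg (E : Type) [NormedAddCommGroup E] [NormedSpace ℝ E]
    (A : BanachFAlg) (η : E →ₗᵢ[ℝ] A.carrier) : Prop :=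
  ∀ (B : BanachFAlg) (T : E →L[ℝ] B.carrier), ‖T‖ ≤ 1 →
    ∃! That : A.carrier →L[ℝ] B.carrier,
      IsLatAlgHom A B That ∧ (∀ x, That (η x) = T x) ∧ ‖That‖ = ‖T‖

/-- The quantity `τ(f)`: the supremum of `‖T̂ f‖` over all contractive operators
`T` from `G` into finite-dimensional semiprime Banach f-algebras, where `T̂` is the
unique lattice-algebra homomorphic extension of `T` given by the universal
property. -/
noncomputable def tau (G : Type) [NormedAddCommGroup G] [NormedSpace ℝ G]
    (A : BanachFAlg) (η : G →ₗᵢ[ℝ] A.carrier) (f : A.carrier) : ℝ :=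
  sSup {r : ℝ |
    ∃ B : BanachFAlg, FiniteDimensional ℝ B.carrier ∧
      (∀ b : B.carrier, B.mul b b = 0 → b = 0) ∧
      ∃ (T : G →L[ℝ] B.carrier) (That : A.carrier →L[ℝ] B.carrier),
        ‖T‖ ≤ 1 ∧ IsLatAlgHom A B That ∧ (∀ x, That (η x) = T x) ∧
        ‖That‖ = ‖T‖ ∧ r = ‖That f‖}

/-!
The free Banach f-algebra `A` over `E` is the closed lattice-subalgebra generated by `η(E)`:
otherwise the inclusion of that subalgebra composed with the extension of the corestricted `η`
would be a second extension of `η` besides the identity. Hence the subalgebras `A_λ` generated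
by `η(E_λ)` have dense union. A contractive projection `P_λ` makes `A_λ` free over `E_λ`: a
contraction `S : E_λ → B` extends to `A_λ` by restricting the extension of `S ∘ P_λ`. The same
extensions show `τ_{E_λ} ≤ τ_E` on `A_λ`, so `‖f‖ ≤ τ_E(f)` on a dense set, and since `τ_E` is
`1`-Lipschitz and bounded by the norm, `τ_E = ‖·‖`.
-/

instance NormedLatticeAddCommGroup.toIsOrderedAddMonoid (α : Type*) [NormedLatticeAddCommGroup α] :
    IsOrderedAddMonoid α :=
  ⟨fun a b h c => by simpa [add_comm] using NormedLatticeAddCommGroup.add_le_add_left a b h c,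
    fun a b h c => NormedLatticeAddCommGroup.add_le_add_left a b h c⟩

namespace BanachFAlg

variable (A : BanachFAlg)

noncomputable def mulCLM : A.carrier →L[ℝ] A.carrier →L[ℝ] A.carrier :=
  LinearMap.mkContinuous₂
    (LinearMap.mk₂ ℝ A.mul A.add_mul' A.smul_mul' A.mul_add' A.mul_smul') 1
    (by intro a b; simpa using A.norm_mul_le' a b)

@[simp] lemma mulCLM_apply (a b : A.carrier) : A.mulCLM a b = A.mul a b := rfl

lemma continuous_mul : Continuous (Function.uncurry A.mul) :=
  A.mulCLM.continuous₂

lemma zero_mul (b : A.carrier) : A.mul 0 b = 0 := by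
  simp [← mulCLM_apply]

def IsSemiprime : Prop := ∀ b : A.carrier, A.mul b b = 0 → b = 0

end BanachFAlg

namespace IsLatAlgHom

lemma zero (A B : BanachFAlg) : IsLatAlgHom A B 0 :=
  ⟨fun _ _ => by simp [BanachFAlg.zero_mul], fun _ _ => by simp⟩

lemma comp {A B C : BanachFAlg} {T : B.carrier →L[ℝ] C.carrier} {S : A.carrier →L[ℝ] B.carrier}
    (hT : IsLatAlgHom B C T) (hS : IsLatAlgHom A B S) : IsLatAlgHom A C (T.comp S) :=
  ⟨fun a b => by simp [hS.1, hT.1], fun a b => by simp [hS.2, hT.2]⟩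

end IsLatAlgHom

section Extension

variable {G : Type} [NormedAddCommGroup G] [NormedSpace ℝ G] {A B : BanachFAlg}
  {η : G →ₗᵢ[ℝ] A.carrier} {T : G →L[ℝ] B.carrier} {That : A.carrier →L[ℝ] B.carrier}

def IsLatAlgExtension (η : G →ₗᵢ[ℝ] A.carrier) (T : G →L[ℝ] B.carrier)
    (That : A.carrier →L[ℝ] B.carrier) : Prop :=
  IsLatAlgHom A B That ∧ (∀ x, That (η x) = T x) ∧ ‖That‖ = ‖T‖

lemma IsLatAlgExtension.of_norm_le (hom : IsLatAlgHom A B That) (hext : ∀ x, That (η x) = T x)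
    (hnorm : ‖That‖ ≤ ‖T‖) : IsLatAlgExtension η T That := by
  refine ⟨hom, hext, hnorm.antisymm ?_⟩
  have hT : T = That.comp η.toContinuousLinearMap := ContinuousLinearMap.ext fun x => (hext x).symm
  calc ‖T‖ ≤ ‖That‖ * ‖η.toContinuousLinearMap‖ := hT ▸ That.opNorm_comp_le _
    _ ≤ ‖That‖ := mul_le_of_le_one_right (norm_nonneg _) η.norm_toContinuousLinearMap_le

lemma IsLatAlgExtension.norm_apply_le (h : IsLatAlgExtension η T That) (hT : ‖T‖ ≤ 1)
    (f : A.carrier) : ‖That f‖ ≤ ‖f‖ :=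
  calc ‖That f‖ ≤ ‖That‖ * ‖f‖ := That.le_opNorm f
    _ ≤ ‖f‖ := mul_le_of_le_one_left (norm_nonneg f) (h.2.2 ▸ hT)

lemma IsFreeBanachFAlg.existsUnique (hfree : IsFreeBanachFAlg G A η) (B : BanachFAlg)
    (T : G →L[ℝ] B.carrier) (hT : ‖T‖ ≤ 1) : ∃! That, IsLatAlgExtension η T That :=
  hfree B T hT

lemma isFreeBanachFAlg_of_subsingleton [Subsingleton G] (η : G →ₗᵢ[ℝ] A.carrier) :
    IsFreeBanachFAlg G A η := by
  intro B T _
  obtain rfl : T = 0 := Subsingleton.elim _ _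
  refine ⟨0, ⟨IsLatAlgHom.zero A B, fun _ => rfl, by simp⟩, fun That h => norm_eq_zero.mp ?_⟩
  rw [h.2.2, norm_zero]

end Extension

section Tau

variable {G : Type} [NormedAddCommGroup G] [NormedSpace ℝ G] {A : BanachFAlg}
  {η : G →ₗᵢ[ℝ] A.carrier}

lemma norm_apply_le_tau {B : BanachFAlg} [FiniteDimensional ℝ B.carrier] (hB : B.IsSemiprime)
    {T : G →L[ℝ] B.carrier} (hT : ‖T‖ ≤ 1) {That : A.carrier →L[ℝ] B.carrier}
    (h : IsLatAlgExtension η T That) (f : A.carrier) : ‖That f‖ ≤ tau G A η f := by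
  refine le_csSup ⟨‖f‖, ?_⟩ ⟨B, ‹_›, hB, T, That, hT, h.1, h.2.1, h.2.2, rfl⟩
  rintro _ ⟨B', -, -, T', That', hT', hom', hext', hnorm', rfl⟩
  exact IsLatAlgExtension.norm_apply_le ⟨hom', hext', hnorm'⟩ hT' f

lemma tau_nonneg (f : A.carrier) : 0 ≤ tau G A η f :=
  Real.sSup_nonneg <| by
    rintro _ ⟨-, -, -, -, That, -, -, -, -, rfl⟩
    exact norm_nonneg _

lemma tau_le {f : A.carrier} {c : ℝ} (hc : 0 ≤ c)
    (h : ∀ (B : BanachFAlg) [FiniteDimensional ℝ B.carrier], B.IsSemiprime →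
      ∀ (T : G →L[ℝ] B.carrier) (That : A.carrier →L[ℝ] B.carrier), ‖T‖ ≤ 1 →
        IsLatAlgExtension η T That → ‖That f‖ ≤ c) :
    tau G A η f ≤ c := by
  refine Real.sSup_le ?_ hc
  rintro _ ⟨B, _, hB, T, That, hT, hom, hext, hnorm, rfl⟩
  exact h B hB T That hT ⟨hom, hext, hnorm⟩

lemma tau_le_norm (f : A.carrier) : tau G A η f ≤ ‖f‖ :=
  tau_le (norm_nonneg f) fun _ _ _ _ _ hT h => h.norm_apply_le hT f

lemma tau_le_tau_add_norm_sub (f g : A.carrier) : tau G A η f ≤ tau G A η g + ‖f - g‖ := by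
  refine tau_le (add_nonneg (tau_nonneg g) (norm_nonneg _)) fun B _ hB T That hT h => ?_
  calc ‖That f‖ = ‖That g + That (f - g)‖ := by rw [map_sub, add_sub_cancel]
    _ ≤ ‖That g‖ + ‖That (f - g)‖ := norm_add_le _ _
    _ ≤ tau G A η g + ‖f - g‖ :=
      add_le_add (norm_apply_le_tau hB hT h g) (h.norm_apply_le hT (f - g))

lemma lipschitzWith_one_tau : LipschitzWith 1 (tau G A η) :=
  LipschitzWith.of_le_add fun f g => by
    simpa only [dist_eq_norm] using tau_le_tau_add_norm_sub f g

lemma tau_eq_zero_of_subsingleton [Subsingleton G] (f : A.carrier) : tau G A η f = 0 := by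
  refine (tau_le le_rfl fun B _ _ T That _ h => ?_).antisymm (tau_nonneg f)
  obtain rfl : T = 0 := Subsingleton.elim _ _
  simp [norm_eq_zero.mp (h.2.2.trans norm_zero)]

end Tau

structure IsLatticeSubalgebra (A : BanachFAlg) (p : Submodule ℝ A.carrier) : Prop where
  mul_mem : ∀ ⦃a b⦄, a ∈ p → b ∈ p → A.mul a b ∈ p
  sup_mem : ∀ ⦃a b⦄, a ∈ p → b ∈ p → a ⊔ b ∈ p

structure IsClosedLatticeSubalgebra (A : BanachFAlg) (p : Submodule ℝ A.carrier) : Prop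
    extends IsLatticeSubalgebra A p where
  isClosed : IsClosed (p : Set A.carrier)

namespace IsLatticeSubalgebra

variable {A : BanachFAlg} {p : Submodule ℝ A.carrier}

lemma inf_mem (h : IsLatticeSubalgebra A p) ⦃a b : A.carrier⦄ (ha : a ∈ p) (hb : b ∈ p) :
    a ⊓ b ∈ p := by
  rw [eq_sub_of_add_eq (inf_add_sup a b)]
  exact sub_mem (add_mem ha hb) (h.sup_mem ha hb)

lemma topologicalClosure (h : IsLatticeSubalgebra A p) :
    IsClosedLatticeSubalgebra A p.topologicalClosure where
  isClosed := p.isClosed_topologicalClosure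
  mul_mem a b ha hb := by
    rw [← SetLike.mem_coe, Submodule.topologicalClosure_coe] at ha hb ⊢
    exact map_mem_closure₂ A.continuous_mul ha hb fun _ ha _ hb => h.mul_mem ha hb
  sup_mem a b ha hb := by
    rw [← SetLike.mem_coe, Submodule.topologicalClosure_coe] at ha hb ⊢
    exact map_mem_closure₂ continuous_sup ha hb fun _ ha _ hb => h.sup_mem ha hb

lemma iSup_of_directed {ι : Type*} [Nonempty ι] {p : ι → Submodule ℝ A.carrier}
    (hdir : Directed (· ≤ ·) p) (h : ∀ i, IsLatticeSubalgebra A (p i)) :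
    IsLatticeSubalgebra A (⨆ i, p i) where
  mul_mem a b ha hb := by
    obtain ⟨i, ha⟩ := (Submodule.mem_iSup_of_directed p hdir).1 ha
    obtain ⟨j, hb⟩ := (Submodule.mem_iSup_of_directed p hdir).1 hb
    obtain ⟨k, hik, hjk⟩ := hdir i j
    exact Submodule.mem_iSup_of_mem k ((h k).mul_mem (hik ha) (hjk hb))
  sup_mem a b ha hb := by
    obtain ⟨i, ha⟩ := (Submodule.mem_iSup_of_directed p hdir).1 ha
    obtain ⟨j, hb⟩ := (Submodule.mem_iSup_of_directed p hdir).1 hb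
    obtain ⟨k, hik, hjk⟩ := hdir i j
    exact Submodule.mem_iSup_of_mem k ((h k).sup_mem (hik ha) (hjk hb))

end IsLatticeSubalgebra

namespace IsClosedLatticeSubalgebra

variable {A : BanachFAlg} {p : Submodule ℝ A.carrier}

noncomputable def toBanachFAlg (h : IsClosedLatticeSubalgebra A p) : BanachFAlg :=
  letI : Lattice p :=
    Subtype.lattice (fun _ _ ha hb => h.sup_mem ha hb) (fun _ _ ha hb => h.inf_mem ha hb)
  haveI : CompleteSpace p := h.isClosed.completeSpace_coe
  { carrier := p
    grp :=
      { solid := fun _ _ hxy => HasSolidNorm.solid (α := A.carrier) hxy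
        add_le_add_left := fun a b hab c =>
          NormedLatticeAddCommGroup.add_le_add_left (a : A.carrier) b hab c }
    mul := fun a b => ⟨A.mul a b, h.mul_mem a.2 b.2⟩
    mul_assoc' := fun a b c => Subtype.ext (A.mul_assoc' a b c)
    add_mul' := fun a b c => Subtype.ext (A.add_mul' a b c)
    mul_add' := fun a b c => Subtype.ext (A.mul_add' a b c)
    smul_mul' := fun r a b => Subtype.ext (A.smul_mul' r a b)
    mul_smul' := fun r a b => Subtype.ext (A.mul_smul' r a b)
    mul_nonneg' := fun a b ha hb => A.mul_nonneg' a b ha hb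
    inf_mul_left' := fun a b c hab hc =>
      Subtype.ext (A.inf_mul_left' a b c (congrArg Subtype.val hab) hc)
    inf_mul_right' := fun a b c hab hc =>
      Subtype.ext (A.inf_mul_right' a b c (congrArg Subtype.val hab) hc)
    norm_mul_le' := fun a b => A.norm_mul_le' a b }

noncomputable def subtype (h : IsClosedLatticeSubalgebra A p) :
    h.toBanachFAlg.carrier →L[ℝ] A.carrier :=
  p.subtypeL

lemma norm_subtype_le (h : IsClosedLatticeSubalgebra A p) : ‖h.subtype‖ ≤ 1 :=
  p.norm_subtypeL_le

lemma isLatAlgHom_subtype (h : IsClosedLatticeSubalgebra A p) :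
    IsLatAlgHom h.toBanachFAlg A h.subtype :=
  ⟨fun _ _ => rfl, fun _ _ => rfl⟩

end IsClosedLatticeSubalgebra

namespace BanachFAlg

variable (A : BanachFAlg)

def adjoin (S : Set A.carrier) : Submodule ℝ A.carrier :=
  sInf {p | IsClosedLatticeSubalgebra A p ∧ S ⊆ p}

variable {A}

lemma subset_adjoin (S : Set A.carrier) : S ⊆ A.adjoin S := fun _ hx =>
  Submodule.mem_sInf.2 fun _ hp => hp.2 hx

lemma adjoin_le {S : Set A.carrier} {p : Submodule ℝ A.carrier}
    (hp : IsClosedLatticeSubalgebra A p) (hS : S ⊆ p) : A.adjoin S ≤ p :=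
  sInf_le ⟨hp, hS⟩

lemma isClosedLatticeSubalgebra_adjoin (S : Set A.carrier) :
    IsClosedLatticeSubalgebra A (A.adjoin S) where
  isClosed := by
    rw [adjoin, Submodule.coe_sInf]
    exact isClosed_biInter fun p hp => hp.1.isClosed
  mul_mem a b ha hb := Submodule.mem_sInf.2 fun p hp =>
    hp.1.mul_mem (Submodule.mem_sInf.1 ha p hp) (Submodule.mem_sInf.1 hb p hp)
  sup_mem a b ha hb := Submodule.mem_sInf.2 fun p hp =>
    hp.1.sup_mem (Submodule.mem_sInf.1 ha p hp) (Submodule.mem_sInf.1 hb p hp)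

lemma adjoin_mono {S S' : Set A.carrier} (h : S ⊆ S') : A.adjoin S ≤ A.adjoin S' :=
  adjoin_le (isClosedLatticeSubalgebra_adjoin S') (h.trans (subset_adjoin S'))

variable (A) in
noncomputable abbrev adjoinAlg (S : Set A.carrier) : BanachFAlg :=
  (isClosedLatticeSubalgebra_adjoin S).toBanachFAlg

end BanachFAlg

section Adjoin

variable {F : Type} [NormedAddCommGroup F] [NormedSpace ℝ F] {A : BanachFAlg}

noncomputable def LinearIsometry.codRestrictAdjoin (φ : F →ₗᵢ[ℝ] A.carrier) :
    F →ₗᵢ[ℝ] (A.adjoinAlg (Set.range φ)).carrier where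
  toLinearMap := φ.toLinearMap.codRestrict _ fun x => A.subset_adjoin _ ⟨x, rfl⟩
  norm_map' := φ.norm_map

theorem BanachFAlg.adjoin_range_ext (φ : F →ₗᵢ[ℝ] A.carrier) {B : BanachFAlg}
    {T₁ T₂ : (A.adjoinAlg (Set.range φ)).carrier →L[ℝ] B.carrier}
    (h₁ : IsLatAlgHom _ B T₁) (h₂ : IsLatAlgHom _ B T₂)
    (h : ∀ x, T₁ (φ.codRestrictAdjoin x) = T₂ (φ.codRestrictAdjoin x)) : T₁ = T₂ := by
  have hp := A.isClosedLatticeSubalgebra_adjoin (Set.range φ)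
  let equalizer : Submodule ℝ A.carrier := (LinearMap.eqLocus
    (T₁ : (A.adjoinAlg (Set.range φ)).carrier →ₗ[ℝ] B.carrier) T₂).map (hp.subtype : _ →ₗ[ℝ] _)
  have hequalizer : IsClosedLatticeSubalgebra A equalizer := by
    refine ⟨⟨?_, ?_⟩, ?_⟩
    · rintro _ _ ⟨a, ha, rfl⟩ ⟨b, hb, rfl⟩
      refine ⟨hp.toBanachFAlg.mul a b, ?_, rfl⟩
      simp_all [h₁.1, h₂.1]
    · rintro _ _ ⟨a, ha, rfl⟩ ⟨b, hb, rfl⟩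
      refine ⟨a ⊔ b, ?_, rfl⟩
      simp_all [h₁.2, h₂.2]
    · rw [Submodule.map_coe]
      exact hp.isClosed.isClosedEmbedding_subtypeVal.isClosedMap _
        (isClosed_eq T₁.continuous T₂.continuous)
  ext a
  obtain ⟨b, hb, hba⟩ := A.adjoin_le hequalizer (by rintro _ ⟨x, rfl⟩; exact ⟨_, h x, rfl⟩) a.2
  obtain rfl : b = a := Subtype.ext hba
  exact hb

end Adjoin

section Free

variable {E : Type} [NormedAddCommGroup E] [NormedSpace ℝ E] {A : BanachFAlg}
  {η : E →ₗᵢ[ℝ] A.carrier}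

theorem IsFreeBanachFAlg.adjoin_range_eq_top [Nontrivial E] (hfree : IsFreeBanachFAlg E A η) :
    A.adjoin (Set.range η) = ⊤ := by
  set incl := (A.isClosedLatticeSubalgebra_adjoin (Set.range η)).subtype
  have hη : ‖η.toContinuousLinearMap‖ = 1 := η.norm_toContinuousLinearMap
  obtain ⟨R, hR, -⟩ := hfree.existsUnique _ η.codRestrictAdjoin.toContinuousLinearMap
    η.codRestrictAdjoin.norm_toContinuousLinearMap_le
  have hid : IsLatAlgExtension η η.toContinuousLinearMap (ContinuousLinearMap.id ℝ A.carrier) :=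
    .of_norm_le ⟨fun _ _ => rfl, fun _ _ => rfl⟩ (fun _ => rfl) (hη ▸ ContinuousLinearMap.norm_id_le)
  have hinclR : IsLatAlgExtension η η.toContinuousLinearMap (incl.comp R) := by
    refine .of_norm_le ((IsClosedLatticeSubalgebra.isLatAlgHom_subtype _).comp hR.1)
      (fun x => congrArg incl (hR.2.1 x)) ?_
    calc ‖incl.comp R‖ ≤ ‖incl‖ * ‖R‖ := incl.opNorm_comp_le R
      _ ≤ ‖R‖ :=
        mul_le_of_le_one_left (norm_nonneg R) (IsClosedLatticeSubalgebra.norm_subtype_le _)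
      _ ≤ ‖η.toContinuousLinearMap‖ :=
        (hR.2.2.trans_le η.codRestrictAdjoin.norm_toContinuousLinearMap_le).trans hη.ge
  have hinclR_eq : incl.comp R = ContinuousLinearMap.id ℝ A.carrier :=
    (hfree.existsUnique A _ hη.le).unique hinclR hid
  refine eq_top_iff.2 fun a _ => ?_
  have hinclRa : incl (R a) = a := DFunLike.congr_fun hinclR_eq a
  exact hinclRa ▸ (R a).2

theorem IsFreeBanachFAlg.dense_iUnion_adjoin [Nontrivial E] (hfree : IsFreeBanachFAlg E A η)
    {ι : Type*} [Nonempty ι] {F : ι → Submodule ℝ E} (hdir : Directed (· ≤ ·) F)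
    (hdense : Dense (⋃ i, (F i : Set E))) :
    Dense (⋃ i, (A.adjoin (Set.range (η.comp (F i).subtypeₗᵢ)) : Set A.carrier)) := by
  set p := fun i => A.adjoin (Set.range (η.comp (F i).subtypeₗᵢ))
  have hpdir : Directed (· ≤ ·) p := fun i j => by
    obtain ⟨k, hik, hjk⟩ := hdir i j
    exact ⟨k, A.adjoin_mono (by rintro _ ⟨y, rfl⟩; exact ⟨⟨y, hik y.2⟩, rfl⟩),
      A.adjoin_mono (by rintro _ ⟨y, rfl⟩; exact ⟨⟨y, hjk y.2⟩, rfl⟩)⟩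
  have hclosure := (IsLatticeSubalgebra.iSup_of_directed hpdir
    fun i => (A.isClosedLatticeSubalgebra_adjoin _).toIsLatticeSubalgebra).topologicalClosure
  have hrange : Set.range η ⊆ (⨆ i, p i).topologicalClosure := by
    rintro _ ⟨x, rfl⟩
    rw [SetLike.mem_coe, ← SetLike.mem_coe, Submodule.topologicalClosure_coe]
    refine map_mem_closure η.continuous (hdense x) fun y hy => ?_
    obtain ⟨i, hy⟩ := Set.mem_iUnion.1 hy
    exact Submodule.mem_iSup_of_mem i (A.subset_adjoin _ ⟨⟨y, hy⟩, rfl⟩)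
  have htop := A.adjoin_le hclosure hrange
  rw [hfree.adjoin_range_eq_top] at htop
  intro a
  rw [← Submodule.coe_iSup_of_directed p hpdir, ← Submodule.topologicalClosure_coe]
  exact htop Submodule.mem_top

variable {F : Submodule ℝ E} {P : E →L[ℝ] F}

lemma isLatAlgExtension_comp_subtype (hP : ‖P‖ ≤ 1) (hPF : ∀ y : F, P y = y) {B : BanachFAlg}
    {S : F →L[ℝ] B.carrier} {That : A.carrier →L[ℝ] B.carrier}
    (h : IsLatAlgExtension η (S.comp P) That) :
    IsLatAlgExtension (η.comp F.subtypeₗᵢ).codRestrictAdjoin S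
      (That.comp (A.isClosedLatticeSubalgebra_adjoin _).subtype) := by
  refine .of_norm_le (h.1.comp (IsClosedLatticeSubalgebra.isLatAlgHom_subtype _))
    (fun y => by show That (η y) = S y; rw [h.2.1, ContinuousLinearMap.comp_apply, hPF]) ?_
  calc ‖That.comp (A.isClosedLatticeSubalgebra_adjoin _).subtype‖
      ≤ ‖That‖ * ‖(A.isClosedLatticeSubalgebra_adjoin _).subtype‖ := That.opNorm_comp_le _
    _ ≤ ‖That‖ :=
      mul_le_of_le_one_right (norm_nonneg _) (IsClosedLatticeSubalgebra.norm_subtype_le _)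
    _ = ‖S.comp P‖ := h.2.2
    _ ≤ ‖S‖ * ‖P‖ := S.opNorm_comp_le P
    _ ≤ ‖S‖ := mul_le_of_le_one_right (norm_nonneg S) hP

theorem IsFreeBanachFAlg.adjoin_of_projection (hfree : IsFreeBanachFAlg E A η) (hP : ‖P‖ ≤ 1)
    (hPF : ∀ y : F, P y = y) :
    IsFreeBanachFAlg F (A.adjoinAlg (Set.range (η.comp F.subtypeₗᵢ)))
      (η.comp F.subtypeₗᵢ).codRestrictAdjoin := by
  intro B S hS
  obtain ⟨That, hThat, -⟩ := hfree.existsUnique B (S.comp P)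
    ((S.opNorm_comp_le P).trans (mul_le_one₀ hS (norm_nonneg P) hP))
  have hext := isLatAlgExtension_comp_subtype hP hPF hThat
  exact ⟨_, hext, fun V hV =>
    A.adjoin_range_ext _ hV.1 hext.1 fun y => (hV.2.1 y).trans (hext.2.1 y).symm⟩

theorem IsFreeBanachFAlg.tau_codRestrictAdjoin_le (hfree : IsFreeBanachFAlg E A η)
    (hP : ‖P‖ ≤ 1) (hPF : ∀ y : F, P y = y)
    (g : (A.adjoinAlg (Set.range (η.comp F.subtypeₗᵢ))).carrier) :
    tau F _ (η.comp F.subtypeₗᵢ).codRestrictAdjoin g ≤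
      tau E A η ((A.isClosedLatticeSubalgebra_adjoin _).subtype g) := by
  refine tau_le (tau_nonneg _) fun B _ hB S Shat hS hShat => ?_
  have hSP : ‖S.comp P‖ ≤ 1 := (S.opNorm_comp_le P).trans (mul_le_one₀ hS (norm_nonneg P) hP)
  obtain ⟨That, hThat, -⟩ := hfree.existsUnique B (S.comp P) hSP
  obtain rfl := ((hfree.adjoin_of_projection hP hPF).existsUnique B S hS).unique hShat
    (isLatAlgExtension_comp_subtype hP hPF hThat)
  exact norm_apply_le_tau hB hSP hThat _

end Free

theorem stmt19_general (E : Type) [NormedAddCommGroup E] [NormedSpace ℝ E]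
    (Λ : Type) [Nonempty Λ] (Esub : Λ → Submodule ℝ E)
    (hdir : ∀ l m, ∃ k, Esub l ≤ Esub k ∧ Esub m ≤ Esub k)
    (hdense : Dense (⋃ l, (Esub l : Set E)))
    (hproj : ∀ l, ∃ P : E →L[ℝ] ↥(Esub l), ‖P‖ ≤ 1 ∧ ∀ y : ↥(Esub l), P (y : E) = y)
    (hsub : ∀ (l : Λ) (Al : BanachFAlg) (ηl : ↥(Esub l) →ₗᵢ[ℝ] Al.carrier),
      IsFreeBanachFAlg ↥(Esub l) Al ηl → ∀ f : Al.carrier, tau ↥(Esub l) Al ηl f = ‖f‖) :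
    ∀ (A : BanachFAlg) (η : E →ₗᵢ[ℝ] A.carrier),
      IsFreeBanachFAlg E A η → ∀ f : A.carrier, tau E A η f = ‖f‖ := by
  intro A η hfree f
  rcases subsingleton_or_nontrivial E with _ | _
  · -- Over the zero space every Banach f-algebra is free and `τ` vanishes, so `hsub` applied to
    -- `A` itself forces `‖f‖ = 0`.
    obtain ⟨l⟩ := ‹Nonempty Λ›
    rw [tau_eq_zero_of_subsingleton, ← hsub l A (η.comp (Esub l).subtypeₗᵢ)
      (isFreeBanachFAlg_of_subsingleton _) f, tau_eq_zero_of_subsingleton]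
  refine (tau_le_norm f).antisymm ?_
  refine (hfree.dense_iUnion_adjoin hdir hdense).induction (P := fun f => ‖f‖ ≤ tau E A η f) ?_
    (isClosed_le continuous_norm lipschitzWith_one_tau.continuous) f
  intro g hg
  obtain ⟨l, hg⟩ := Set.mem_iUnion.1 hg
  obtain ⟨P, hP, hPF⟩ := hproj l
  calc ‖g‖ = tau (Esub l) _ (η.comp (Esub l).subtypeₗᵢ).codRestrictAdjoin ⟨g, hg⟩ :=
        (hsub l _ _ (hfree.adjoin_of_projection hP hPF) ⟨g, hg⟩).symm
    _ ≤ tau E A η g := hfree.tau_codRestrictAdjoin_le hP hPF ⟨g, hg⟩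

theorem stmt19 (E : Type) [NormedAddCommGroup E] [NormedSpace ℝ E] [CompleteSpace E]
    (Λ : Type) [Nonempty Λ] (Esub : Λ → Submodule ℝ E)
    (hclosed : ∀ l, IsClosed ((Esub l : Set E)))
    (hdir : ∀ l m, ∃ k, Esub l ≤ Esub k ∧ Esub m ≤ Esub k)
    (hdense : Dense (⋃ l, (Esub l : Set E)))
    (hproj : ∀ l, ∃ P : E →L[ℝ] ↥(Esub l), ‖P‖ ≤ 1 ∧ ∀ y : ↥(Esub l), P (y : E) = y)
    (hsub : ∀ (l : Λ) (Al : BanachFAlg) (ηl : ↥(Esub l) →ₗᵢ[ℝ] Al.carrier),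
      IsFreeBanachFAlg ↥(Esub l) Al ηl → ∀ f : Al.carrier, tau ↥(Esub l) Al ηl f = ‖f‖) :
    ∀ (A : BanachFAlg) (η : E →ₗᵢ[ℝ] A.carrier),
      IsFreeBanachFAlg E A η → ∀ f : A.carrier, tau E A η f = ‖f‖ :=
  stmt19_general E Λ Esub hdir hdense hproj hsub
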